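/- arXiv:2501.10939 — 3 statements merged into one kernel-verified Lean document; each statement's English description precedes it below -/
import Mathlib

section
/- Writing a^+ = max(a,0) and a^- = max(-a,0), for real numbers p, q and every positive integer n one has (q - p)·((n+1) q^- - n p^-) ≤ (q^-)^2/(4n). -/
/-- Key monotone estimate in the penalization proof: for real numbers `p, q` and
positive integer `n`, `(q - p)·((n+1) q⁻ − n p⁻) ≤ (q⁻)²/(4n)`, where `a⁻ = max (-a) 0`
denotes the negative part. -/
theorem stmt_1 (p q : ℝ) (n : ℕ) (hn : 0 < n) :
    (q - p) * (((n : ℝ) + 1) * max (-q) 0 - (n : ℝ) * max (-p) 0) ≤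
      (max (-q) 0) ^ 2 / (4 * n) := by
  have hn' : (1 : ℝ) ≤ n := by exact_mod_cast hn
  have h4 : (0 : ℝ) < 4 * n := by linarith
  rw [le_div_iff₀ h4]
  rcases le_or_gt 0 q with hq | hq <;> rcases le_or_gt 0 p with hp | hp
  · rw [max_eq_right (by linarith), max_eq_right (by linarith)]; nlinarith
  · rw [max_eq_right (by linarith), max_eq_left (by linarith)]
    have h1 : 0 ≤ q * (-p) := mul_nonneg hq (by linarith)
    nlinarith [mul_nonneg (mul_nonneg (by linarith : (0:ℝ) ≤ n) (by linarith : (0:ℝ) ≤ n)) h1,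
      mul_nonneg (mul_nonneg (by linarith : (0:ℝ) ≤ n) (by linarith : (0:ℝ) ≤ n)) (sq_nonneg p)]
  · rw [max_eq_left (by linarith), max_eq_right (by linarith)]
    have h1 : 0 ≤ (p - q) * (-q) := mul_nonneg (by linarith) (by linarith)
    nlinarith [mul_nonneg (mul_nonneg (by linarith : (0:ℝ) ≤ n) (by linarith : (0:ℝ) ≤ (n:ℝ)+1)) h1,
      sq_nonneg q]
  · rw [max_eq_left (by linarith), max_eq_left (by linarith)]
    nlinarith [sq_nonneg (2 * (n : ℝ) * (q - p) + q), sq_nonneg (q - p)]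
end

section
/- Let l, r : [0,T]×ℝ → ℝ satisfy: continuity in t, strict monotonicity and bi-Lipschitz continuity in x with constants 0 < c < C, and inf_{t,x}(r(t,x) − l(t,x)) > 0. Let s ∈ C[0,T], let (x, K) solve the Skorokhod problem SP_l^r(s) with decomposition K = K^r − K^l, and let φ_t, ψ_t be the unique solutions of l(t, s_t + φ_t) = 0 and r(t, s_t + ψ_t) = 0 respectively. Then the total variation of K on [0,T] satisfies Var_0^T(K) = K^r_T + K^l_T ≤ Var_0^T(φ) + Var_0^T(ψ). -/
/-! Times at which `x` touches the lower boundary and times at which it touches the upper one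
are a uniform distance `δ > 0` apart, since `t ↦ r(t, x_t)` is uniformly continuous and
`r - l ≥ ε`. So on each interval of length `< δ` one of `Kl`, `Kr` is constant, and the increment
of `K` there is `ΔKr + ΔKl`. If `Kr` is constant, `Kl` can only grow between the first and the
last contact time `a ≤ b` with the lower boundary, where `K = φ`; hence `ΔKl = φ a - φ b`, which
is bounded by the variation of `φ`. Symmetrically for `Kr` and `ψ`, and all these local bounds
add up over `[0, T]` because variation is additive on adjacent intervals. -/

open Set

/-- A solution `(x, K)` (with Jordan decomposition `K = Kr - Kl`) of the Skorokhod
problem `SP_l^r(s)` on `[0, T]` with two nonlinear time-dependent reflecting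
constraints.  The flat-off conditions `∫ 1_{l(s,x_s)<0} dKl = ∫ 1_{r(s,x_s)>0} dKr = 0`
are expressed by requiring `Kl` (resp. `Kr`) to be constant on every subinterval where
the lower (resp. upper) constraint is strictly inactive. -/
structure SkorokhodSolution (T : ℝ) (l r : ℝ → ℝ → ℝ) (s : ℝ → ℝ)
    (x K Kr Kl : ℝ → ℝ) : Prop where
  cont_x : ContinuousOn x (Icc 0 T)
  eqn : ∀ t ∈ Icc (0 : ℝ) T, x t = s t + K t
  lower : ∀ t ∈ Icc (0 : ℝ) T, l t (x t) ≤ 0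
  upper : ∀ t ∈ Icc (0 : ℝ) T, 0 ≤ r t (x t)
  decomp : ∀ t ∈ Icc (0 : ℝ) T, K t = Kr t - Kl t
  Kr_zero : Kr 0 = 0
  Kl_zero : Kl 0 = 0
  cont_Kr : ContinuousOn Kr (Icc 0 T)
  cont_Kl : ContinuousOn Kl (Icc 0 T)
  mono_Kr : MonotoneOn Kr (Icc 0 T)
  mono_Kl : MonotoneOn Kl (Icc 0 T)
  flat_l : ∀ a b : ℝ, 0 ≤ a → a ≤ b → b ≤ T →
    (∀ u ∈ Icc a b, l u (x u) < 0) → Kl b = Kl a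
  flat_r : ∀ a b : ℝ, 0 ≤ a → a ≤ b → b ≤ T →
    (∀ u ∈ Icc a b, 0 < r u (x u)) → Kr b = Kr a

def LRAssumptions (T c C : ℝ) (l r : ℝ → ℝ → ℝ) : Prop :=
  (∀ x : ℝ, ContinuousOn (fun t => l t x) (Icc 0 T)) ∧
  (∀ x : ℝ, ContinuousOn (fun t => r t x) (Icc 0 T)) ∧
  (∀ t ∈ Icc (0 : ℝ) T, StrictMono (l t)) ∧
  (∀ t ∈ Icc (0 : ℝ) T, StrictMono (r t)) ∧
  (∀ t ∈ Icc (0 : ℝ) T, ∀ x y : ℝ,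
    c * |x - y| ≤ |l t x - l t y| ∧ |l t x - l t y| ≤ C * |x - y|) ∧
  (∀ t ∈ Icc (0 : ℝ) T, ∀ x y : ℝ,
    c * |x - y| ≤ |r t x - r t y| ∧ |r t x - r t y| ≤ C * |x - y|) ∧
  (∃ ε : ℝ, 0 < ε ∧ ∀ t ∈ Icc (0 : ℝ) T, ∀ x : ℝ, ε ≤ r t x - l t x)

theorem ContinuousOn.eq_of_const_on_Ioo {α β : Type*} [LinearOrder α] [TopologicalSpace α]
    [OrderTopology α] [DenselyOrdered α] [TopologicalSpace β] [T2Space β] {f : α → β} {a b : α}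
    (hab : a ≤ b) (hf : ContinuousOn f (Icc a b))
    (h : ∀ u v, a < u → u ≤ v → v < b → f v = f u) : f b = f a := by
  rcases hab.eq_or_lt with rfl | hlt
  · rfl
  obtain ⟨m, ham, hmb⟩ := exists_between hlt
  have hconst : EqOn f (fun _ => f m) (Icc a b) := by
    refine EqOn.of_subset_closure (fun u hu => ?_) hf continuousOn_const Ioo_subset_Icc_self
      (closure_Ioo hlt.ne).ge
    rcases le_total u m with hum | hmu
    · exact (h u m hu.1 hum hmb).symm
    · exact h m u ham hmu hu.2
  exact (hconst (right_mem_Icc.2 hab)).trans (hconst (left_mem_Icc.2 hab)).symm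

theorem edist_sub_sub_le {E : Type*} [SeminormedAddCommGroup E] (a₁ a₂ b₁ b₂ : E) :
    edist (a₁ - a₂) (b₁ - b₂) ≤ edist a₁ b₁ + edist a₂ b₂ := by
  simp only [edist_dist]
  rw [← ENNReal.ofReal_add dist_nonneg dist_nonneg]
  exact ENNReal.ofReal_le_ofReal (dist_sub_sub_le a₁ a₂ b₁ b₂)

theorem eVariationOn_sub_le {α E : Type*} [LinearOrder α] [SeminormedAddCommGroup E]
    (f g : α → E) (s : Set α) :
    eVariationOn (f - g) s ≤ eVariationOn f s + eVariationOn g s := by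
  refine iSup_le fun ⟨n, u, hu, hus⟩ => ?_
  calc ∑ i ∈ Finset.range n, edist ((f - g) (u (i + 1))) ((f - g) (u i))
      ≤ ∑ i ∈ Finset.range n,
          (edist (f (u (i + 1))) (f (u i)) + edist (g (u (i + 1))) (g (u i))) :=
        Finset.sum_le_sum fun i _ => edist_sub_sub_le _ _ _ _
    _ ≤ eVariationOn f s + eVariationOn g s := by
        rw [Finset.sum_add_distrib]
        exact add_le_add (eVariationOn.sum_le hu hus) (eVariationOn.sum_le hu hus)

theorem ofReal_sub_le_eVariationOn_of_forall_sub_lt {F G : ℝ → ℝ} {a b δ : ℝ} (hδ : 0 < δ)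
    (hF : MonotoneOn F (Icc a b))
    (hloc : ∀ p q, a ≤ p → p ≤ q → q ≤ b → q - p < δ →
      ENNReal.ofReal (F q - F p) ≤ eVariationOn G (Icc p q))
    (hab : a ≤ b) :
    ENNReal.ofReal (F b - F a) ≤ eVariationOn G (Icc a b) := by
  suffices h : ∀ n : ℕ, ∀ p, a ≤ p → p ≤ b → b - p ≤ n * (δ / 2) →
      ENNReal.ofReal (F b - F p) ≤ eVariationOn G (Icc p b) by
    obtain ⟨n, hn⟩ := exists_nat_ge ((b - a) / (δ / 2))
    exact h n a le_rfl hab ((div_le_iff₀ (by positivity)).1 hn)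
  intro n
  induction n with
  | zero =>
    intro p hap hpb hbp
    exact hloc p b hap hpb le_rfl (by push_cast at hbp; linarith)
  | succ n ih =>
    intro p hap hpb hbp
    rcases lt_or_ge (b - p) δ with hshort | hlong
    · exact hloc p b hap hpb le_rfl hshort
    set m := p + δ / 2
    have hpm : p ≤ m := by simp only [m]; linarith
    have hmb : m ≤ b := by simp only [m]; linarith
    have hFpm := hF ⟨hap, hpb⟩ ⟨hap.trans hpm, hmb⟩ hpm
    have hFmb := hF ⟨hap.trans hpm, hmb⟩ ⟨hap.trans hpb, le_rfl⟩ hmb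
    calc ENNReal.ofReal (F b - F p)
        = ENNReal.ofReal (F m - F p) + ENNReal.ofReal (F b - F m) := by
          rw [← ENNReal.ofReal_add (by linarith) (by linarith)]
          congr 1
          ring
      _ ≤ eVariationOn G (Icc p m) + eVariationOn G (Icc m b) := by
          exact add_le_add (hloc p m hap hpm hmb (by simp only [m]; linarith)) (ih m
            (hap.trans hpm) hmb (by push_cast at hbp; simp only [m]; linarith))
      _ = eVariationOn G (Icc p b) := by
          simpa only [univ_inter] using eVariationOn.Icc_add_Icc G hpm hmb (mem_univ m)

/-- `F` is constant before the first and after the last point of `Z`. -/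
theorem ofReal_sub_le_eVariationOn_of_flat {F G : ℝ → ℝ} {Z : Set ℝ} {p q : ℝ} (hpq : p ≤ q)
    (hZ : IsClosed Z) (hZpq : Z ⊆ Icc p q) (hF : ContinuousOn F (Icc p q))
    (hflat : ∀ a b, p ≤ a → a ≤ b → b ≤ q → (∀ u ∈ Icc a b, u ∉ Z) → F b = F a)
    (hG : ∀ a ∈ Z, ∀ b ∈ Z, a ≤ b → F b - F a ≤ |G b - G a|) :
    ENNReal.ofReal (F q - F p) ≤ eVariationOn G (Icc p q) := by
  rcases Z.eq_empty_or_nonempty with rfl | hne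
  · simp [hflat p q le_rfl hpq le_rfl fun _ _ => notMem_empty _]
  have hbdd : BddBelow Z := ⟨p, fun u hu => (hZpq hu).1⟩
  have hbdd' : BddAbove Z := ⟨q, fun u hu => (hZpq hu).2⟩
  have ha := hZ.csInf_mem hne hbdd
  have hb := hZ.csSup_mem hne hbdd'
  have hFa : F (sInf Z) = F p :=
    (hF.mono (Icc_subset_Icc_right (hZpq ha).2)).eq_of_const_on_Ioo (hZpq ha).1
      fun u v hu huv hv => hflat u v hu.le huv (hv.le.trans (hZpq ha).2)
        fun w hw hwZ => not_lt.2 (csInf_le hbdd hwZ) (hw.2.trans_lt hv)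
  have hFb : F q = F (sSup Z) :=
    (hF.mono (Icc_subset_Icc_left (hZpq hb).1)).eq_of_const_on_Ioo (hZpq hb).2
      fun u v hu huv hv => hflat u v ((hZpq hb).1.trans hu.le) huv hv.le
        fun w hw hwZ => not_lt.2 (le_csSup hbdd' hwZ) (hu.trans_le hw.1)
  calc ENNReal.ofReal (F q - F p) = ENNReal.ofReal (F (sSup Z) - F (sInf Z)) := by
        rw [hFa, hFb]
    _ ≤ ENNReal.ofReal |G (sSup Z) - G (sInf Z)| :=
        ENNReal.ofReal_le_ofReal (hG _ ha _ hb (csInf_le_csSup hne hbdd hbdd'))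
    _ = edist (G (sSup Z)) (G (sInf Z)) := by rw [edist_dist, Real.dist_eq]
    _ ≤ eVariationOn G (Icc p q) := eVariationOn.edist_le G (hZpq hb) (hZpq ha)

theorem continuousOn_comp_of_lipschitz {α : Type*} [TopologicalSpace α] {S : Set α}
    {f : α → ℝ → ℝ} {C : ℝ} {x : α → ℝ}
    (hf : ∀ y, ContinuousOn (fun t => f t y) S)
    (hlip : ∀ t ∈ S, ∀ y z, |f t y - f t z| ≤ C * |y - z|) (hx : ContinuousOn x S) :
    ContinuousOn (fun t => f t (x t)) S := by
  have hprod : ContinuousOn (fun p : α × ℝ => f p.1 p.2) (S ×ˢ univ) :=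
    continuousOn_prod_of_continuousOn_lipschitzOnWith' _ C.toNNReal
      (fun t ht => LipschitzOnWith.of_dist_le' fun y _ z _ => by
        simpa only [Real.dist_eq] using hlip t ht y z)
      fun y _ => hf y
  exact hprod.comp (continuousOn_id.prodMk hx) fun t ht => ⟨ht, mem_univ _⟩

theorem IsCompact.exists_pos_le_dist_of_zero {α : Type*} [PseudoMetricSpace α] {S : Set α}
    (hS : IsCompact S) {g h : α → ℝ} (hh : ContinuousOn h S) {ε : ℝ} (hε : 0 < ε)
    (hgh : ∀ t ∈ S, ε ≤ h t - g t) :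
    ∃ δ > 0, ∀ u ∈ S, ∀ v ∈ S, g u = 0 → h v = 0 → δ ≤ dist u v := by
  obtain ⟨δ, hδ, hunif⟩ := Metric.uniformContinuousOn_iff.1
    (hS.uniformContinuousOn_of_continuous hh) ε hε
  refine ⟨δ, hδ, fun u hu v hv hgu hhv => not_lt.1 fun huv => ?_⟩
  have hclose := hunif u hu v hv huv
  have hsep := hgh u hu
  rw [Real.dist_eq, hhv, sub_zero] at hclose
  rw [hgu, sub_zero] at hsep
  linarith [le_abs_self (h u)]

namespace SkorokhodSolution

variable {T : ℝ} {l r : ℝ → ℝ → ℝ} {s x K Kr Kl : ℝ → ℝ}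

theorem Kr_nonneg (hsol : SkorokhodSolution T l r s x K Kr Kl) {t : ℝ} (ht : t ∈ Icc 0 T) :
    0 ≤ Kr t :=
  hsol.Kr_zero ▸ hsol.mono_Kr (left_mem_Icc.2 (ht.1.trans ht.2)) ht ht.1

theorem Kl_nonneg (hsol : SkorokhodSolution T l r s x K Kr Kl) {t : ℝ} (ht : t ∈ Icc 0 T) :
    0 ≤ Kl t :=
  hsol.Kl_zero ▸ hsol.mono_Kl (left_mem_Icc.2 (ht.1.trans ht.2)) ht ht.1

theorem eVariationOn_le (hsol : SkorokhodSolution T l r s x K Kr Kl) (hT : 0 ≤ T) :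
    eVariationOn K (Icc 0 T) ≤ ENNReal.ofReal (Kr T + Kl T) := by
  have h0 : (0 : ℝ) ∈ Icc 0 T := left_mem_Icc.2 hT
  have hT' : T ∈ Icc 0 T := right_mem_Icc.2 hT
  calc eVariationOn K (Icc 0 T) = eVariationOn (Kr - Kl) (Icc 0 T) :=
        eVariationOn.eq_of_eqOn hsol.decomp
    _ ≤ eVariationOn Kr (Icc 0 T) + eVariationOn Kl (Icc 0 T) := eVariationOn_sub_le _ _ _
    _ = ENNReal.ofReal (Kr T + Kl T) := by
        rw [← inter_self (Icc 0 T), hsol.mono_Kr.eVariationOn_eq h0 hT',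
          hsol.mono_Kl.eVariationOn_eq h0 hT', hsol.Kr_zero, hsol.Kl_zero, sub_zero, sub_zero,
          ENNReal.ofReal_add (hsol.Kr_nonneg hT') (hsol.Kl_nonneg hT')]

theorem K_eq_of_apply_eq_zero (hsol : SkorokhodSolution T l r s x K Kr Kl) {f : ℝ → ℝ}
    (hf : Function.Injective f) {t y : ℝ} (ht : t ∈ Icc 0 T) (hy : f (s t + y) = 0)
    (hxt : f (x t) = 0) : K t = y := by
  have := hf (hxt.trans hy.symm)
  rw [hsol.eqn t ht] at this
  linarith

theorem Kl_eq_or_Kr_eq (hsol : SkorokhodSolution T l r s x K Kr Kl) {δ : ℝ}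
    (hsep : ∀ u ∈ Icc 0 T, ∀ v ∈ Icc 0 T, l u (x u) = 0 → r v (x v) = 0 → δ ≤ dist u v)
    {p q : ℝ} (hp : 0 ≤ p) (hpq : p ≤ q) (hq : q ≤ T) (hpqδ : q - p < δ) :
    Kl q = Kl p ∨ Kr q = Kr p := by
  have hsub : Icc p q ⊆ Icc 0 T := Icc_subset_Icc hp hq
  by_cases hzero : ∃ u ∈ Icc p q, l u (x u) = 0
  · obtain ⟨u, hu, hu0⟩ := hzero
    refine Or.inr <| hsol.flat_r p q hp hpq hq fun v hv =>
      (hsol.upper v (hsub hv)).lt_of_ne fun hv0 => ?_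
    exact (hsep u (hsub hu) v (hsub hv) hu0 hv0.symm).not_gt
      ((Real.dist_le_of_mem_Icc hu hv).trans_lt hpqδ)
  · push Not at hzero
    exact Or.inl <| hsol.flat_l p q hp hpq hq fun u hu =>
      (hsol.lower u (hsub hu)).lt_of_ne (hzero u hu)

theorem ofReal_add_sub_le_eVariationOn (hsol : SkorokhodSolution T l r s x K Kr Kl) {p q : ℝ}
    (hp : 0 ≤ p) (hpq : p ≤ q) (hq : q ≤ T) (h : Kl q = Kl p ∨ Kr q = Kr p) :
    ENNReal.ofReal (Kr q + Kl q - (Kr p + Kl p)) ≤ eVariationOn K (Icc p q) := by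
  have hpT : p ∈ Icc 0 T := ⟨hp, hpq.trans hq⟩
  have hqT : q ∈ Icc 0 T := ⟨hp.trans hpq, hq⟩
  have hKr := hsol.mono_Kr hpT hqT hpq
  have hKl := hsol.mono_Kl hpT hqT hpq
  have hle : Kr q + Kl q - (Kr p + Kl p) ≤ |K q - K p| := by
    rw [hsol.decomp q hqT, hsol.decomp p hpT]
    rcases h with h | h <;> rw [h]
    · exact (le_of_eq (by ring)).trans (le_abs_self _)
    · exact (le_of_eq (by ring)).trans (neg_le_abs _)
  calc ENNReal.ofReal (Kr q + Kl q - (Kr p + Kl p)) ≤ ENNReal.ofReal |K q - K p| :=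
        ENNReal.ofReal_le_ofReal hle
    _ = edist (K q) (K p) := by rw [edist_dist, Real.dist_eq]
    _ ≤ eVariationOn K (Icc p q) :=
        eVariationOn.edist_le K (right_mem_Icc.2 hpq) (left_mem_Icc.2 hpq)

theorem ofReal_Kl_sub_le_eVariationOn (hsol : SkorokhodSolution T l r s x K Kr Kl) {φ : ℝ → ℝ}
    (hl : ∀ t ∈ Icc 0 T, Function.Injective (l t))
    (hφ : ∀ t ∈ Icc 0 T, l t (s t + φ t) = 0)
    (hg : ContinuousOn (fun t => l t (x t)) (Icc 0 T)) {p q : ℝ} (hp : 0 ≤ p) (hpq : p ≤ q)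
    (hq : q ≤ T) (hKr : Kr q = Kr p) :
    ENNReal.ofReal (Kl q - Kl p) ≤ eVariationOn φ (Icc p q) := by
  have hsub : Icc p q ⊆ Icc 0 T := Icc_subset_Icc hp hq
  have hKr_const : ∀ t ∈ Icc p q, Kr t = Kr p := fun t ht =>
    le_antisymm (hKr ▸ hsol.mono_Kr (hsub ht) (hsub (right_mem_Icc.2 hpq)) ht.2)
      (hsol.mono_Kr (hsub (left_mem_Icc.2 hpq)) (hsub ht) ht.1)
  refine ofReal_sub_le_eVariationOn_of_flat hpq
    ((hg.mono hsub).preimage_isClosed_of_isClosed isClosed_Icc isClosed_singleton)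
    inter_subset_left (hsol.cont_Kl.mono hsub)
    (fun a b ha hab hb hZ => hsol.flat_l a b (hp.trans ha) hab (hb.trans hq) fun u hu =>
      (hsol.lower u (hsub ⟨ha.trans hu.1, hu.2.trans hb⟩)).lt_of_ne
        fun h0 => hZ u hu ⟨⟨ha.trans hu.1, hu.2.trans hb⟩, h0⟩) ?_
  rintro a ⟨ha, ha0⟩ b ⟨hb, hb0⟩ -
  rw [← hsol.K_eq_of_apply_eq_zero (hl a (hsub ha)) (hsub ha) (hφ a (hsub ha)) ha0,
    ← hsol.K_eq_of_apply_eq_zero (hl b (hsub hb)) (hsub hb) (hφ b (hsub hb)) hb0,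
    hsol.decomp a (hsub ha), hsol.decomp b (hsub hb), hKr_const a ha, hKr_const b hb]
  exact (le_of_eq (by ring)).trans (neg_le_abs _)

theorem ofReal_Kr_sub_le_eVariationOn (hsol : SkorokhodSolution T l r s x K Kr Kl) {ψ : ℝ → ℝ}
    (hr : ∀ t ∈ Icc 0 T, Function.Injective (r t))
    (hψ : ∀ t ∈ Icc 0 T, r t (s t + ψ t) = 0)
    (hh : ContinuousOn (fun t => r t (x t)) (Icc 0 T)) {p q : ℝ} (hp : 0 ≤ p) (hpq : p ≤ q)
    (hq : q ≤ T) (hKl : Kl q = Kl p) :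
    ENNReal.ofReal (Kr q - Kr p) ≤ eVariationOn ψ (Icc p q) := by
  have hsub : Icc p q ⊆ Icc 0 T := Icc_subset_Icc hp hq
  have hKl_const : ∀ t ∈ Icc p q, Kl t = Kl p := fun t ht =>
    le_antisymm (hKl ▸ hsol.mono_Kl (hsub ht) (hsub (right_mem_Icc.2 hpq)) ht.2)
      (hsol.mono_Kl (hsub (left_mem_Icc.2 hpq)) (hsub ht) ht.1)
  refine ofReal_sub_le_eVariationOn_of_flat hpq
    ((hh.mono hsub).preimage_isClosed_of_isClosed isClosed_Icc isClosed_singleton)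
    inter_subset_left (hsol.cont_Kr.mono hsub)
    (fun a b ha hab hb hZ => hsol.flat_r a b (hp.trans ha) hab (hb.trans hq) fun u hu =>
      (hsol.upper u (hsub ⟨ha.trans hu.1, hu.2.trans hb⟩)).lt_of_ne
        fun h0 => hZ u hu ⟨⟨ha.trans hu.1, hu.2.trans hb⟩, h0.symm⟩) ?_
  rintro a ⟨ha, ha0⟩ b ⟨hb, hb0⟩ -
  rw [← hsol.K_eq_of_apply_eq_zero (hr a (hsub ha)) (hsub ha) (hψ a (hsub ha)) ha0,
    ← hsol.K_eq_of_apply_eq_zero (hr b (hsub hb)) (hsub hb) (hψ b (hsub hb)) hb0,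
    hsol.decomp a (hsub ha), hsol.decomp b (hsub hb), hKl_const a ha, hKl_const b hb]
  exact (le_of_eq (by ring)).trans (le_abs_self _)

end SkorokhodSolution

theorem stmt_5_general (T c C : ℝ) (hT : 0 ≤ T)
    (l r : ℝ → ℝ → ℝ) (s : ℝ → ℝ)
    (hlr : LRAssumptions T c C l r)
    (x K Kr Kl : ℝ → ℝ)
    (hsol : SkorokhodSolution T l r s x K Kr Kl)
    (φ ψ : ℝ → ℝ)
    (hφ : ∀ t ∈ Icc (0 : ℝ) T, l t (s t + φ t) = 0)
    (hψ : ∀ t ∈ Icc (0 : ℝ) T, r t (s t + ψ t) = 0) :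
    eVariationOn K (Icc 0 T) = ENNReal.ofReal (Kr T + Kl T) ∧
    eVariationOn K (Icc 0 T) ≤ eVariationOn φ (Icc 0 T) + eVariationOn ψ (Icc 0 T) := by
  obtain ⟨hlc, hrc, hlm, hrm, hlL, hrL, ε, hε, hgap⟩ := hlr
  have hg := continuousOn_comp_of_lipschitz hlc (fun t ht y z => (hlL t ht y z).2) hsol.cont_x
  have hh := continuousOn_comp_of_lipschitz hrc (fun t ht y z => (hrL t ht y z).2) hsol.cont_x
  obtain ⟨δ, hδ, hsep⟩ :=
    isCompact_Icc.exists_pos_le_dist_of_zero hh hε fun t ht => hgap t ht (x t)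
  have hK : ENNReal.ofReal (Kr T + Kl T) ≤ eVariationOn K (Icc 0 T) := by
    simpa [hsol.Kr_zero, hsol.Kl_zero] using
      ofReal_sub_le_eVariationOn_of_forall_sub_lt hδ (hsol.mono_Kr.add hsol.mono_Kl)
        (fun p q hp hpq hq hpqδ => hsol.ofReal_add_sub_le_eVariationOn hp hpq hq
          (hsol.Kl_eq_or_Kr_eq hsep hp hpq hq hpqδ)) hT
  have hKl : ENNReal.ofReal (Kl T) ≤ eVariationOn φ (Icc 0 T) := by
    simpa [hsol.Kl_zero] using
      ofReal_sub_le_eVariationOn_of_forall_sub_lt hδ hsol.mono_Kl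
        (fun p q hp hpq hq hpqδ => (hsol.Kl_eq_or_Kr_eq hsep hp hpq hq hpqδ).elim
          (fun h => by simp [h])
          (hsol.ofReal_Kl_sub_le_eVariationOn (fun t ht => (hlm t ht).injective) hφ hg
            hp hpq hq)) hT
  have hKr : ENNReal.ofReal (Kr T) ≤ eVariationOn ψ (Icc 0 T) := by
    simpa [hsol.Kr_zero] using
      ofReal_sub_le_eVariationOn_of_forall_sub_lt hδ hsol.mono_Kr
        (fun p q hp hpq hq hpqδ => (hsol.Kl_eq_or_Kr_eq hsep hp hpq hq hpqδ).elim
          (hsol.ofReal_Kr_sub_le_eVariationOn (fun t ht => (hrm t ht).injective) hψ hh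
            hp hpq hq) (fun h => by simp [h])) hT
  have hT' : T ∈ Icc 0 T := right_mem_Icc.2 hT
  have hvar : eVariationOn K (Icc 0 T) = ENNReal.ofReal (Kr T + Kl T) :=
    le_antisymm (hsol.eVariationOn_le hT) hK
  refine ⟨hvar, ?_⟩
  rw [hvar, ENNReal.ofReal_add (hsol.Kr_nonneg hT') (hsol.Kl_nonneg hT'), add_comm]
  exact add_le_add hKl hKr

/-- Total variation estimate for the reflecting force of the Skorokhod problem:
with `φ_t, ψ_t` the unique solutions of `l(t, s_t + φ_t) = 0` and `r(t, s_t + ψ_t) = 0`,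
one has `Var₀ᵀ(K) = Kr_T + Kl_T ≤ Var₀ᵀ(φ) + Var₀ᵀ(ψ)`. -/
theorem stmt_5 (T c C : ℝ) (hT : 0 ≤ T) (hc : 0 < c) (hcC : c < C)
    (l r : ℝ → ℝ → ℝ) (s : ℝ → ℝ) (hs : ContinuousOn s (Icc 0 T))
    (hlr : LRAssumptions T c C l r)
    (x K Kr Kl : ℝ → ℝ)
    (hsol : SkorokhodSolution T l r s x K Kr Kl)
    (φ ψ : ℝ → ℝ)
    (hφ : ∀ t ∈ Icc (0 : ℝ) T, l t (s t + φ t) = 0)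
    (hψ : ∀ t ∈ Icc (0 : ℝ) T, r t (s t + ψ t) = 0) :
    eVariationOn K (Icc 0 T) = ENNReal.ofReal (Kr T + Kl T) ∧
    eVariationOn K (Icc 0 T) ≤ eVariationOn φ (Icc 0 T) + eVariationOn ψ (Icc 0 T) :=
  stmt_5_general T c C hT l r s hlr x K Kr Kl hsol φ ψ hφ hψ
end

section
/- Let (l^i, r^i), i = 1, 2, satisfy the standing assumptions (continuity in t, strict monotonicity and bi-Lipschitz continuity in x, uniformly separated, i.e. inf(r^i − l^i) > 0), with r^1 ≥ r^2 and l^1 ≤ l^2 pointwise. For a fixed continuous input s, let (x^i, K^i) solve the Skorokhod problem SP_{l^i}^{r^i}(s) with K^i = K^{i,r} − K^{i,l}. Then K^{2,r}_t ≥ K^{1,r}_t and K^{2,l}_t ≥ K^{1,l}_t for every t ≥ 0. -/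
open Set

/-
Suppose the comparison fails and let `τ` be the first time at which it fails. Just after `τ`,
say `K¹ʳ` overtakes `K²ʳ`; then `K¹ʳ` must grow, so the upper constraint of problem 1 is active
at some `u`, where `r²(u, x²_u) ≥ 0 = r¹(u, x¹_u) ≥ r²(u, x¹_u)` gives `x¹_u ≤ x²_u`, which forces
`K¹ˡ_u > K²ˡ_u`. The same argument for the lower constraint on `[τ, u]` shows that the lower
constraint of problem 1 is also active before `u`. Letting `u ↓ τ`, both constraints of
problem 1 are active at `τ`, which contradicts `inf (r¹ - l¹) > 0`.
-/

theorem ContinuousOn.apply_of_lipschitzWith {α β γ : Type*} [TopologicalSpace α]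
    [PseudoEMetricSpace β] [PseudoEMetricSpace γ] {s : Set α} {f : α → β → γ} {x : α → β}
    {K : NNReal} (hf : ∀ y, ContinuousOn (f · y) s) (hL : ∀ t ∈ s, LipschitzWith K (f t))
    (hx : ContinuousOn x s) : ContinuousOn (fun t => f t (x t)) s :=
  (continuousOn_prod_of_continuousOn_lipschitzOnWith' (Function.uncurry f) K
      (fun t ht => (hL t ht).lipschitzOnWith) (fun y _ => hf y)).comp
    (continuousOn_id.prodMk hx) (fun _ ht => ⟨ht, mem_univ _⟩)

theorem lipschitzWith_toNNReal_of_abs_sub_le {g : ℝ → ℝ} {C : ℝ}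
    (h : ∀ a b, |g a - g b| ≤ C * |a - b|) : LipschitzWith C.toNNReal g :=
  LipschitzWith.of_dist_le_mul fun a b => by
    simpa only [Real.dist_eq] using
      (h a b).trans (mul_le_mul_of_nonneg_right (Real.le_coe_toNNReal C) (abs_nonneg _))

theorem le_of_le_on_Ico {f g : ℝ → ℝ} {a b : ℝ} (hab : a ≤ b) (hf : ContinuousOn f (Icc a b))
    (hg : ContinuousOn g (Icc a b)) (ha : f a ≤ g a) (h : ∀ w ∈ Ico a b, f w ≤ g w) :
    f b ≤ g b := by
  rcases hab.eq_or_lt with rfl | hlt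
  · exact ha
  rw [← closure_Ico hlt.ne] at hf hg
  exact le_on_closure h hf hg (by simp [closure_Ico hlt.ne, hab])

theorem exists_last_le_of_lt {f g : ℝ → ℝ} {a b : ℝ} (hab : a ≤ b)
    (hf : ContinuousOn f (Icc a b)) (hg : ContinuousOn g (Icc a b)) (ha : f a ≤ g a)
    (hb : g b < f b) : ∃ c ∈ Ico a b, f c ≤ g c ∧ ∀ w ∈ Ioc c b, g w < f w := by
  set A := {w | w ∈ Icc a b ∧ f w ≤ g w}
  have hA : IsClosed A := isClosed_Icc.isClosed_le hf hg
  have hAbdd : BddAbove A := ⟨b, fun w hw => hw.1.2⟩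
  obtain ⟨⟨hac, hcb⟩, hc⟩ : sSup A ∈ A := hA.csSup_mem ⟨a, ⟨left_mem_Icc.2 hab, ha⟩⟩ hAbdd
  refine ⟨sSup A, ⟨hac, hcb.lt_of_ne ?_⟩, hc, fun w hw => ?_⟩
  · rintro hcb
    rw [hcb] at hc
    exact hb.not_ge hc
  · by_contra! hw'
    exact hw.1.not_ge (le_csSup hAbdd ⟨⟨hac.trans hw.1.le, hw.2⟩, hw'⟩)

theorem IsClosed.csInf_mem_of_forall_exists_le {α : Type*} [ConditionallyCompleteLinearOrder α]
    [TopologicalSpace α] [OrderTopology α] {Z S : Set α} (hZ : IsClosed Z) (hS : S.Nonempty)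
    (h : ∀ t ∈ S, ∃ u ∈ Z, sInf S ≤ u ∧ u ≤ t) : sInf S ∈ Z := by
  set Z' := Z ∩ Ici (sInf S)
  obtain ⟨t, ht⟩ := hS
  obtain ⟨u, hu, hτu, -⟩ := h t ht
  have hZ'ne : Z'.Nonempty := ⟨u, hu, hτu⟩
  have hZ'b : BddBelow Z' := ⟨sInf S, fun _ hv => hv.2⟩
  have heq : sInf Z' = sInf S := le_antisymm
    (le_csInf ⟨t, ht⟩ fun t ht => by
      obtain ⟨v, hv, hτv, hvt⟩ := h t ht
      exact (csInf_le hZ'b ⟨hv, hτv⟩).trans hvt)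
    (le_csInf hZ'ne fun _ hv => hv.2)
  exact heq ▸ (hZ.inter isClosed_Ici).csInf_mem hZ'ne hZ'b |>.1

namespace SkorokhodSolution

variable {T : ℝ} {l r : ℝ → ℝ → ℝ} {s x K Kr Kl : ℝ → ℝ}

theorem reflect (h : SkorokhodSolution T l r s x K Kr Kl) :
    SkorokhodSolution T (fun t y => -r t (-y)) (fun t y => -l t (-y)) (-s) (-x) (-K) Kl Kr where
  cont_x := h.cont_x.neg
  eqn t ht := by simp only [Pi.neg_apply, h.eqn t ht, neg_add]
  lower t ht := by simpa using h.upper t ht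
  upper t ht := by simpa using h.lower t ht
  decomp t ht := by simp only [Pi.neg_apply, h.decomp t ht, neg_sub]
  Kr_zero := h.Kl_zero
  Kl_zero := h.Kr_zero
  cont_Kr := h.cont_Kl
  cont_Kl := h.cont_Kr
  mono_Kr := h.mono_Kl
  mono_Kl := h.mono_Kr
  flat_l a b ha hab hb hu := h.flat_r a b ha hab hb fun u hu' => by simpa using hu u hu'
  flat_r a b ha hab hb hu := h.flat_l a b ha hab hb fun u hu' => by simpa using hu u hu'

theorem flat_r_Ioc (h : SkorokhodSolution T l r s x K Kr Kl) {a b : ℝ} (ha : 0 ≤ a) (hab : a ≤ b)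
    (hb : b ≤ T) (hr : ∀ u ∈ Ioc a b, 0 < r u (x u)) : Kr b = Kr a := by
  rcases hab.eq_or_lt with rfl | hlt
  · rfl
  have hsub : Icc a b ⊆ Icc 0 T := Icc_subset_Icc ha hb
  have hconst : EqOn Kr (fun _ => Kr b) (Ioc a b) := fun a' ha' =>
    (h.flat_r a' b (ha.trans ha'.1.le) ha'.2 hb
      fun u hu => hr u ⟨ha'.1.trans_le hu.1, hu.2⟩).symm
  exact (hconst.of_subset_closure (h.cont_Kr.mono hsub) continuousOn_const Ioc_subset_Icc_self
    (closure_Ioc hlt.ne).ge (left_mem_Icc.2 hab)).symm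

variable {l₁ r₁ l₂ r₂ : ℝ → ℝ → ℝ} {x₁ K₁ Kr₁ Kl₁ x₂ K₂ Kr₂ Kl₂ : ℝ → ℝ} {τ t : ℝ}

theorem exists_upper_active (hsol₁ : SkorokhodSolution T l₁ r₁ s x₁ K₁ Kr₁ Kl₁)
    (hsol₂ : SkorokhodSolution T l₂ r₂ s x₂ K₂ Kr₂ Kl₂)
    (hr : ∀ t ∈ Icc (0 : ℝ) T, ∀ y, r₂ t y ≤ r₁ t y) (hr₂ : ∀ t ∈ Icc (0 : ℝ) T, StrictMono (r₂ t))
    (hτ : 0 ≤ τ) (hτt : τ ≤ t) (ht : t ≤ T) (hτr : Kr₁ τ ≤ Kr₂ τ) (htr : Kr₂ t < Kr₁ t) :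
    ∃ u ∈ Icc τ t, r₁ u (x₁ u) = 0 ∧ Kl₂ u < Kl₁ u := by
  have hsub : Icc τ t ⊆ Icc 0 T := Icc_subset_Icc hτ ht
  obtain ⟨a, ⟨hτa, hat⟩, har, hlt⟩ := exists_last_le_of_lt hτt (hsol₁.cont_Kr.mono hsub)
    (hsol₂.cont_Kr.mono hsub) hτr htr
  have hgrow : Kr₁ a < Kr₁ t := calc
    Kr₁ a ≤ Kr₂ a := har
    _ ≤ Kr₂ t := hsol₂.mono_Kr (hsub ⟨hτa, hat.le⟩) (hsub ⟨hτt, le_rfl⟩) hat.le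
    _ < Kr₁ t := htr
  obtain ⟨u, hu, hru⟩ : ∃ u ∈ Ioc a t, r₁ u (x₁ u) ≤ 0 := by
    by_contra! hpos
    exact hgrow.ne (hsol₁.flat_r_Ioc (hτ.trans hτa) hat.le ht hpos).symm
  have huτ : u ∈ Icc τ t := ⟨hτa.trans hu.1.le, hu.2⟩
  have huT : u ∈ Icc 0 T := hsub huτ
  have hr0 : r₁ u (x₁ u) = 0 := hru.antisymm (hsol₁.upper u huT)
  have hx : x₁ u ≤ x₂ u := (hr₂ u huT).le_iff_le.1 <| calc
    r₂ u (x₁ u) ≤ r₁ u (x₁ u) := hr u huT _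
    _ = 0 := hr0
    _ ≤ r₂ u (x₂ u) := hsol₂.upper u huT
  refine ⟨u, huτ, hr0, ?_⟩
  have hKr : Kr₂ u < Kr₁ u := hlt u hu
  rw [hsol₁.eqn u huT, hsol₂.eqn u huT, hsol₁.decomp u huT, hsol₂.decomp u huT] at hx
  linarith

theorem exists_lower_active (hsol₁ : SkorokhodSolution T l₁ r₁ s x₁ K₁ Kr₁ Kl₁)
    (hsol₂ : SkorokhodSolution T l₂ r₂ s x₂ K₂ Kr₂ Kl₂)
    (hl : ∀ t ∈ Icc (0 : ℝ) T, ∀ y, l₁ t y ≤ l₂ t y) (hl₂ : ∀ t ∈ Icc (0 : ℝ) T, StrictMono (l₂ t))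
    (hτ : 0 ≤ τ) (hτt : τ ≤ t) (ht : t ≤ T) (hτl : Kl₁ τ ≤ Kl₂ τ) (htl : Kl₂ t < Kl₁ t) :
    ∃ u ∈ Icc τ t, l₁ u (x₁ u) = 0 ∧ Kr₂ u < Kr₁ u := by
  obtain ⟨u, hu, hl0, hlt⟩ := hsol₁.reflect.exists_upper_active hsol₂.reflect
    (fun t ht y => neg_le_neg (hl t ht (-y)))
    (fun t ht => ((hl₂ t ht).comp_strictAnti fun _ _ => neg_lt_neg).neg) hτ hτt ht hτl htl
  exact ⟨u, hu, by simpa using hl0, hlt⟩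

theorem exists_both_active (hsol₁ : SkorokhodSolution T l₁ r₁ s x₁ K₁ Kr₁ Kl₁)
    (hsol₂ : SkorokhodSolution T l₂ r₂ s x₂ K₂ Kr₂ Kl₂)
    (hr : ∀ t ∈ Icc (0 : ℝ) T, ∀ y, r₂ t y ≤ r₁ t y)
    (hl : ∀ t ∈ Icc (0 : ℝ) T, ∀ y, l₁ t y ≤ l₂ t y)
    (hr₂ : ∀ t ∈ Icc (0 : ℝ) T, StrictMono (r₂ t)) (hl₂ : ∀ t ∈ Icc (0 : ℝ) T, StrictMono (l₂ t))
    (hτ : 0 ≤ τ) (hτt : τ ≤ t) (ht : t ≤ T) (hτr : Kr₁ τ ≤ Kr₂ τ) (hτl : Kl₁ τ ≤ Kl₂ τ)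
    (hviol : Kr₂ t < Kr₁ t ∨ Kl₂ t < Kl₁ t) :
    (∃ u ∈ Icc τ t, r₁ u (x₁ u) = 0) ∧ ∃ u ∈ Icc τ t, l₁ u (x₁ u) = 0 := by
  rcases hviol with htr | htl
  · obtain ⟨u, hu, hr0, hul⟩ := hsol₁.exists_upper_active hsol₂ hr hr₂ hτ hτt ht hτr htr
    obtain ⟨v, hv, hl0, -⟩ :=
      hsol₁.exists_lower_active hsol₂ hl hl₂ hτ hu.1 (hu.2.trans ht) hτl hul
    exact ⟨⟨u, hu, hr0⟩, v, ⟨hv.1, hv.2.trans hu.2⟩, hl0⟩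
  · obtain ⟨v, hv, hl0, hvr⟩ := hsol₁.exists_lower_active hsol₂ hl hl₂ hτ hτt ht hτl htl
    obtain ⟨u, hu, hr0, -⟩ :=
      hsol₁.exists_upper_active hsol₂ hr hr₂ hτ hv.1 (hv.2.trans ht) hτr hvr
    exact ⟨⟨u, ⟨hu.1, hu.2.trans hv.2⟩, hr0⟩, v, hv, hl0⟩

theorem le_of_forall_Ico (hsol₁ : SkorokhodSolution T l₁ r₁ s x₁ K₁ Kr₁ Kl₁)
    (hsol₂ : SkorokhodSolution T l₂ r₂ s x₂ K₂ Kr₂ Kl₂) (hτ : τ ∈ Icc 0 T)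
    (h : ∀ w ∈ Ico 0 τ, Kr₁ w ≤ Kr₂ w ∧ Kl₁ w ≤ Kl₂ w) : Kr₁ τ ≤ Kr₂ τ ∧ Kl₁ τ ≤ Kl₂ τ := by
  have hsub : Icc 0 τ ⊆ Icc 0 T := Icc_subset_Icc_right hτ.2
  exact ⟨le_of_le_on_Ico hτ.1 (hsol₁.cont_Kr.mono hsub) (hsol₂.cont_Kr.mono hsub)
      (by rw [hsol₁.Kr_zero, hsol₂.Kr_zero]) fun w hw => (h w hw).1,
    le_of_le_on_Ico hτ.1 (hsol₁.cont_Kl.mono hsub) (hsol₂.cont_Kl.mono hsub)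
      (by rw [hsol₁.Kl_zero, hsol₂.Kl_zero]) fun w hw => (h w hw).2⟩

end SkorokhodSolution

namespace LRAssumptions

variable {T c C : ℝ} {l r : ℝ → ℝ → ℝ} {x : ℝ → ℝ}

theorem continuousOn_lower (h : LRAssumptions T c C l r) (hx : ContinuousOn x (Icc 0 T)) :
    ContinuousOn (fun t => l t (x t)) (Icc 0 T) :=
  ContinuousOn.apply_of_lipschitzWith h.1
    (fun t ht => lipschitzWith_toNNReal_of_abs_sub_le fun a b => (h.2.2.2.2.1 t ht a b).2) hx

theorem continuousOn_upper (h : LRAssumptions T c C l r) (hx : ContinuousOn x (Icc 0 T)) :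
    ContinuousOn (fun t => r t (x t)) (Icc 0 T) :=
  ContinuousOn.apply_of_lipschitzWith h.2.1
    (fun t ht => lipschitzWith_toNNReal_of_abs_sub_le fun a b => (h.2.2.2.2.2.1 t ht a b).2) hx

end LRAssumptions

theorem stmt_6_general (T c C : ℝ) (l₁ r₁ l₂ r₂ : ℝ → ℝ → ℝ) (s : ℝ → ℝ)
    (h₁ : LRAssumptions T c C l₁ r₁) (h₂ : LRAssumptions T c C l₂ r₂)
    (hr : ∀ t ∈ Icc (0 : ℝ) T, ∀ y : ℝ, r₂ t y ≤ r₁ t y)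
    (hl : ∀ t ∈ Icc (0 : ℝ) T, ∀ y : ℝ, l₁ t y ≤ l₂ t y)
    (x₁ K₁ Kr₁ Kl₁ x₂ K₂ Kr₂ Kl₂ : ℝ → ℝ)
    (hsol₁ : SkorokhodSolution T l₁ r₁ s x₁ K₁ Kr₁ Kl₁)
    (hsol₂ : SkorokhodSolution T l₂ r₂ s x₂ K₂ Kr₂ Kl₂) :
    ∀ t ∈ Icc (0 : ℝ) T, Kr₁ t ≤ Kr₂ t ∧ Kl₁ t ≤ Kl₂ t := by
  intro t₀ ht₀
  by_contra hviol₀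
  rw [not_and_or, not_le, not_le] at hviol₀
  set S := {t ∈ Icc (0 : ℝ) T | Kr₂ t < Kr₁ t ∨ Kl₂ t < Kl₁ t}
  have hSne : S.Nonempty := ⟨t₀, ht₀, hviol₀⟩
  have hSbdd : BddBelow S := ⟨0, fun _ ht => ht.1.1⟩
  set τ := sInf S
  have hτ : τ ∈ Icc 0 T :=
    ⟨le_csInf hSne fun _ ht => ht.1.1, (csInf_le hSbdd ⟨ht₀, hviol₀⟩).trans ht₀.2⟩
  have hbefore (w) (hw : w ∈ Ico 0 τ) : Kr₁ w ≤ Kr₂ w ∧ Kl₁ w ≤ Kl₂ w := by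
    have := notMem_of_lt_csInf hw.2 hSbdd
    simp only [S, mem_ofPred_eq, not_and, not_or, not_lt] at this
    exact this ⟨hw.1, hw.2.le.trans hτ.2⟩
  obtain ⟨hτr, hτl⟩ := hsol₁.le_of_forall_Ico hsol₂ hτ hbefore
  have hactive (t) (ht : t ∈ S) := hsol₁.exists_both_active hsol₂ hr hl h₂.2.2.2.1 h₂.2.2.1 hτ.1
    (csInf_le hSbdd ht) ht.1.2 hτr hτl ht.2
  have hzero (f : ℝ → ℝ) (hf : ContinuousOn f (Icc 0 T))
      (hfS : ∀ t ∈ S, ∃ u ∈ Icc τ t, f u = 0) : f τ = 0 :=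
    ((hf.preimage_isClosed_of_isClosed isClosed_Icc
      isClosed_singleton).csInf_mem_of_forall_exists_le hSne fun t ht => by
        obtain ⟨u, hu, hu0⟩ := hfS t ht
        exact ⟨u, ⟨⟨hτ.1.trans hu.1, hu.2.trans ht.1.2⟩, hu0⟩, hu⟩).2
  have hrτ := hzero _ (h₁.continuousOn_upper hsol₁.cont_x) fun t ht => (hactive t ht).1
  have hlτ := hzero _ (h₁.continuousOn_lower hsol₁.cont_x) fun t ht => (hactive t ht).2
  obtain ⟨ε, hε, hsep⟩ := h₁.2.2.2.2.2.2
  linarith [hsep τ hτ (x₁ τ)]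

/-- Comparison property for Skorokhod problems with two nonlinear reflecting
boundaries: if `r¹ ≥ r²` and `l¹ ≤ l²` pointwise, then the wider band requires
less pushing in both directions: `K²ʳ_t ≥ K¹ʳ_t` and `K²ˡ_t ≥ K¹ˡ_t`. -/
theorem stmt_6 (T c C : ℝ) (hT : 0 ≤ T) (hc : 0 < c) (hcC : c < C)
    (l₁ r₁ l₂ r₂ : ℝ → ℝ → ℝ) (s : ℝ → ℝ) (hs : ContinuousOn s (Icc 0 T))
    (h₁ : LRAssumptions T c C l₁ r₁) (h₂ : LRAssumptions T c C l₂ r₂)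
    (hr : ∀ t ∈ Icc (0 : ℝ) T, ∀ y : ℝ, r₂ t y ≤ r₁ t y)
    (hl : ∀ t ∈ Icc (0 : ℝ) T, ∀ y : ℝ, l₁ t y ≤ l₂ t y)
    (x₁ K₁ Kr₁ Kl₁ x₂ K₂ Kr₂ Kl₂ : ℝ → ℝ)
    (hsol₁ : SkorokhodSolution T l₁ r₁ s x₁ K₁ Kr₁ Kl₁)
    (hsol₂ : SkorokhodSolution T l₂ r₂ s x₂ K₂ Kr₂ Kl₂) :
    ∀ t ∈ Icc (0 : ℝ) T, Kr₁ t ≤ Kr₂ t ∧ Kl₁ t ≤ Kl₂ t :=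
  stmt_6_general T c C l₁ r₁ l₂ r₂ s h₁ h₂ hr hl x₁ K₁ Kr₁ Kl₁ x₂ K₂ Kr₂ Kl₂ hsol₁ hsol₂
end
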